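/- For any Eulerian graph G on n ≥ 4 vertices, every vertex of TS_2(G) has even degree; specifically, for an independent set I = {v_1, v_2}, deg_{TS_2(G)}(I) = deg_G(v_1) + deg_G(v_2) − 2|N_G(v_1) ∩ N_G(v_2)|, which is even. Consequently every connected component of TS_2(G) is Eulerian. -/

import Mathlib

/-!
A neighbour of `I` in `TS_k(G)` arises from exactly one slide of a token `u ∈ I` along an edge
`uw` to a vertex `w` adjacent to no other token, so the degree of `I` counts these slides. For
`I = {v₁, v₂}` the slides correspond to the vertices of `N(v₁) Δ N(v₂)`, and
`|N(v₁) Δ N(v₂)| + 2 |N(v₁) ∩ N(v₂)| = deg v₁ + deg v₂`,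
which is even when both degrees are.
-/

open SimpleGraph

/-- `I` is an independent (stable) set of `G`. -/
def IsIndep {V : Type*} (G : SimpleGraph V) (I : Finset V) : Prop :=
  ∀ u ∈ I, ∀ v ∈ I, ¬ G.Adj u v

/-- Vertices of the `TS_k`-reconfiguration graph: size-`k` independent sets of `G`. -/
abbrev TSVert {V : Type*} (G : SimpleGraph V) (k : ℕ) := {I : Finset V // I.card = k ∧ IsIndep G I}

/-- The `TS_k`-reconfiguration graph of `G`: size-`k` independent sets, adjacent iff
`I \ J = {u}`, `J \ I = {v}` and `uv ∈ E(G)`. -/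
def TSk {V : Type*} [DecidableEq V] (G : SimpleGraph V) (k : ℕ) : SimpleGraph (TSVert G k) :=
  SimpleGraph.fromRel (fun I J =>
    ∃ u v, (I : Finset V) \ (J : Finset V) = {u} ∧
      (J : Finset V) \ (I : Finset V) = {v} ∧ G.Adj u v)


namespace Finset

variable {α : Type*} [DecidableEq α] {s t : Finset α} {a b : α}

theorem eq_insert_erase_of_sdiff_eq_singleton (hst : s \ t = {a}) (hts : t \ s = {b}) :
    t = insert b (s.erase a) := by
  ext x
  have ha := Finset.ext_iff.mp hst x
  have hb := Finset.ext_iff.mp hts x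
  simp only [mem_sdiff, mem_singleton] at ha hb
  simp only [mem_insert, mem_erase]
  tauto

theorem sdiff_insert_erase (ha : a ∈ s) (hb : b ∉ s) : s \ insert b (s.erase a) = {a} := by
  ext x
  simp only [mem_sdiff, mem_insert, mem_erase, mem_singleton]
  constructor
  · tauto
  · rintro rfl
    exact ⟨ha, fun h => by rcases h with rfl | h <;> tauto⟩

theorem insert_erase_sdiff (hb : b ∉ s) : insert b (s.erase a) \ s = {b} := by
  ext x
  simp only [mem_sdiff, mem_insert, mem_erase, mem_singleton]
  constructor
  · tauto
  · rintro rfl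
    exact ⟨Or.inl rfl, hb⟩

end Finset

theorem Set.ncard_sdiff_add_ncard_sdiff_add_two_mul_ncard_inter {α : Type*} (s t : Set α)
    (hs : s.Finite := by toFinite_tac) (ht : t.Finite := by toFinite_tac) :
    (s \ t).ncard + (t \ s).ncard + 2 * (s ∩ t).ncard = s.ncard + t.ncard := by
  have hs' := Set.ncard_inter_add_ncard_sdiff_eq_ncard s t hs
  have ht' := Set.ncard_inter_add_ncard_sdiff_eq_ncard t s ht
  rw [Set.inter_comm] at ht'
  omega

section TokenSliding

variable {V : Type*} {G : SimpleGraph V} {k : ℕ}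

def tokenSlides (G : SimpleGraph V) (I : Finset V) : Set (V × V) :=
  {p | p.1 ∈ I ∧ G.Adj p.1 p.2 ∧ ∀ x ∈ I, x ≠ p.1 → ¬ G.Adj x p.2}

theorem IsIndep.snd_notMem_of_mem_tokenSlides {I : Finset V} (hI : IsIndep G I) {p : V × V}
    (hp : p ∈ tokenSlides G I) : p.2 ∉ I :=
  fun h => hI _ hp.1 _ h hp.2.1

variable [DecidableEq V]

theorem IsIndep.insert_erase_of_mem_tokenSlides {I : Finset V} (hI : IsIndep G I)
    {p : V × V} (hp : p ∈ tokenSlides G I) : IsIndep G (insert p.2 (I.erase p.1)) := by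
  have hnadj : ∀ y ∈ I.erase p.1, ¬ G.Adj y p.2 := fun y hy =>
    hp.2.2 y (Finset.mem_of_mem_erase hy) (Finset.ne_of_mem_erase hy)
  intro x hx y hy
  rw [Finset.mem_insert] at hx hy
  rcases hx with rfl | hx <;> rcases hy with rfl | hy
  · exact G.irrefl
  · exact fun h => hnadj y hy h.symm
  · exact hnadj x hx
  · exact hI x (Finset.mem_of_mem_erase hx) y (Finset.mem_of_mem_erase hy)

theorem tokenSlides_pair {v₁ v₂ : V} (hne : v₁ ≠ v₂) :
    tokenSlides G {v₁, v₂} = (v₁, ·) '' (G.neighborSet v₁ \ G.neighborSet v₂) ∪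
      (v₂, ·) '' (G.neighborSet v₂ \ G.neighborSet v₁) := by
  ext ⟨u, w⟩
  simp only [tokenSlides, Set.mem_ofPred_eq, Finset.mem_insert, Finset.mem_singleton,
    Set.mem_union, Set.mem_image, Set.mem_sdiff, mem_neighborSet, Prod.mk.injEq]
  aesop

theorem ncard_tokenSlides_pair [Finite V] {v₁ v₂ : V} (hne : v₁ ≠ v₂) :
    (tokenSlides G {v₁, v₂}).ncard = (G.neighborSet v₁ \ G.neighborSet v₂).ncard +
      (G.neighborSet v₂ \ G.neighborSet v₁).ncard := by
  have hdisj : Disjoint ((v₁, ·) '' (G.neighborSet v₁ \ G.neighborSet v₂))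
      ((v₂, ·) '' (G.neighborSet v₂ \ G.neighborSet v₁)) := by
    rw [Set.disjoint_left]
    rintro _ ⟨w, -, rfl⟩ ⟨w', -, h⟩
    exact hne (Prod.ext_iff.mp h).1.symm
  rw [tokenSlides_pair hne, Set.ncard_union_eq hdisj,
    Set.ncard_image_of_injective _ (Prod.mk_right_injective v₁),
    Set.ncard_image_of_injective _ (Prod.mk_right_injective v₂)]

namespace TSk

theorem adj_iff {I J : TSVert G k} :
    (TSk G k).Adj I J ↔ ∃ u w, I.1 \ J.1 = {u} ∧ J.1 \ I.1 = {w} ∧ G.Adj u w := by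
  rw [TSk, fromRel_adj]
  constructor
  · rintro ⟨-, h | ⟨u, w, hJI, hIJ, huw⟩⟩
    · exact h
    · exact ⟨w, u, hIJ, hJI, huw.symm⟩
  · rintro h
    refine ⟨fun hIJ => ?_, Or.inl h⟩
    obtain ⟨u, -, hu, -⟩ := h
    simp [hIJ] at hu

def slide (I : TSVert G k) (p : V × V) (hp : p ∈ tokenSlides G I) : TSVert G k := by
  refine ⟨insert p.2 (I.1.erase p.1), ?_, I.2.2.insert_erase_of_mem_tokenSlides hp⟩
  have hpos : 0 < I.1.card := Finset.card_pos.mpr ⟨_, hp.1⟩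
  rw [Finset.card_insert_of_notMem
      (fun h => I.2.2.snd_notMem_of_mem_tokenSlides hp (Finset.mem_of_mem_erase h)),
    Finset.card_erase_of_mem hp.1, I.2.1]
  omega

theorem slide_adj (I : TSVert G k) {p : V × V} (hp : p ∈ tokenSlides G I) :
    (TSk G k).Adj I (slide I p hp) := by
  have hp₂ := I.2.2.snd_notMem_of_mem_tokenSlides hp
  exact adj_iff.mpr ⟨p.1, p.2, Finset.sdiff_insert_erase hp.1 hp₂,
    Finset.insert_erase_sdiff hp₂, hp.2.1⟩

theorem slide_injective (I : TSVert G k) {p q : V × V} (hp : p ∈ tokenSlides G I)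
    (hq : q ∈ tokenSlides G I) (h : slide I p hp = slide I q hq) : p = q := by
  have hp₂ := I.2.2.snd_notMem_of_mem_tokenSlides hp
  have hq₂ := I.2.2.snd_notMem_of_mem_tokenSlides hq
  have hset : insert p.2 (I.1.erase p.1) = insert q.2 (I.1.erase q.1) := congrArg Subtype.val h
  have h₁ := Finset.sdiff_insert_erase hp.1 hp₂
  have h₂ := Finset.insert_erase_sdiff (a := p.1) hp₂
  rw [hset, Finset.sdiff_insert_erase hq.1 hq₂] at h₁
  rw [hset, Finset.insert_erase_sdiff hq₂] at h₂
  exact Prod.ext (Finset.singleton_injective h₁).symm (Finset.singleton_injective h₂).symm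

theorem exists_slide_eq_of_adj {I J : TSVert G k} (h : (TSk G k).Adj I J) :
    ∃ p hp, slide I p hp = J := by
  obtain ⟨u, w, hIJ, hJI, huw⟩ := adj_iff.mp h
  have hu : u ∈ I.1 \ J.1 := hIJ ▸ Finset.mem_singleton_self u
  have hw : w ∈ J.1 \ I.1 := hJI ▸ Finset.mem_singleton_self w
  have hslide : (u, w) ∈ tokenSlides G I := by
    refine ⟨(Finset.mem_sdiff.mp hu).1, huw,
      fun x hx hxu => J.2.2 x ?_ w (Finset.mem_sdiff.mp hw).1⟩
    by_contra hxJ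
    exact hxu (Finset.mem_singleton.mp (hIJ ▸ Finset.mem_sdiff.mpr ⟨hx, hxJ⟩))
  exact ⟨(u, w), hslide,
    Subtype.ext (Finset.eq_insert_erase_of_sdiff_eq_singleton hIJ hJI).symm⟩

theorem ncard_neighborSet (I : TSVert G k) :
    ((TSk G k).neighborSet I).ncard = (tokenSlides G I).ncard :=
  (Set.ncard_congr (fun p hp => slide I p hp) (fun _ hp => slide_adj I hp)
    (fun _ _ hp hq => slide_injective I hp hq) (fun _ hJ => exists_slide_eq_of_adj hJ)).symm

theorem ncard_neighborSet_pair [Finite V] (v₁ v₂ : V)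
    (h : ({v₁, v₂} : Finset V).card = 2 ∧ IsIndep G ({v₁, v₂} : Finset V)) :
    ((TSk G 2).neighborSet ⟨{v₁, v₂}, h⟩).ncard +
        2 * (G.neighborSet v₁ ∩ G.neighborSet v₂).ncard =
      (G.neighborSet v₁).ncard + (G.neighborSet v₂).ncard := by
  have hne : v₁ ≠ v₂ := by
    rintro rfl
    simp at h
  rw [ncard_neighborSet, ncard_tokenSlides_pair hne]
  exact Set.ncard_sdiff_add_ncard_sdiff_add_two_mul_ncard_inter _ _

end TSk

end TokenSliding

theorem stmt16_general {V : Type*} [Fintype V] [DecidableEq V] (G : SimpleGraph V)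
    (heven : ∀ v : V, Even (G.neighborSet v).ncard) :
    (∀ v₁ v₂ : V,
      ∀ h : ({v₁, v₂} : Finset V).card = 2 ∧ IsIndep G ({v₁, v₂} : Finset V),
        ((TSk G 2).neighborSet ⟨{v₁, v₂}, h⟩).ncard
          = (G.neighborSet v₁).ncard + (G.neighborSet v₂).ncard
            - 2 * (G.neighborSet v₁ ∩ G.neighborSet v₂).ncard) ∧
    (∀ I : TSVert G 2, Even (((TSk G 2).neighborSet I).ncard)) := by
  refine ⟨fun v₁ v₂ h => ?_, fun ⟨I, hI⟩ => ?_⟩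
  · have := TSk.ncard_neighborSet_pair v₁ v₂ h
    omega
  · obtain ⟨v₁, v₂, -, rfl⟩ := Finset.card_eq_two.mp hI.1
    have hsum := TSk.ncard_neighborSet_pair v₁ v₂ hI
    have hdeg : Even (((TSk G 2).neighborSet ⟨{v₁, v₂}, hI⟩).ncard
        + 2 * (G.neighborSet v₁ ∩ G.neighborSet v₂).ncard) :=
      hsum ▸ (heven v₁).add (heven v₂)
    exact (Nat.even_add.mp hdeg).mpr (even_two_mul _)

/-- For an Eulerian graph `G` on at least 4 vertices, every vertex `I = {v₁, v₂}` of
`TS_2(G)` has degree `deg v₁ + deg v₂ − 2|N(v₁) ∩ N(v₂)|`, which is even; hence every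
connected component of `TS_2(G)` is Eulerian. -/
theorem stmt16 {V : Type*} [Fintype V] [DecidableEq V] (G : SimpleGraph V)
    (hn : 4 ≤ Fintype.card V) (hconn : G.Connected)
    (heven : ∀ v : V, Even (G.neighborSet v).ncard) :
    (∀ v₁ v₂ : V,
      ∀ h : ({v₁, v₂} : Finset V).card = 2 ∧ IsIndep G ({v₁, v₂} : Finset V),
        ((TSk G 2).neighborSet ⟨{v₁, v₂}, h⟩).ncard
          = (G.neighborSet v₁).ncard + (G.neighborSet v₂).ncard
            - 2 * (G.neighborSet v₁ ∩ G.neighborSet v₂).ncard) ∧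
    (∀ I : TSVert G 2, Even (((TSk G 2).neighborSet I).ncard)) :=
  stmt16_general G heven
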